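/- arXiv:2203.14089 — 2 statements merged into one kernel-verified Lean document; each statement's English description precedes it below -/
import Mathlib

section
/- For every shape parameter ε > 0, every d ≥ 1, and every finite set of pairwise distinct points x_1, …, x_N ∈ ℝ^d, the inverse multiquadric kernel matrix A with entries A_{ij} = (1 + ε² ‖x_i − x_j‖²)^{−1/2} (Euclidean norm) is symmetric positive definite. -/
/-!
Subordination to the Gaussian: `r ^ (-β) = Γ(β)⁻¹ ∫₀^∞ t ^ (β - 1) e^(-r t) dt` writes the
quadratic form of the inverse multiquadric matrix `(1 + s‖xᵢ - xⱼ‖²) ^ (-β)` as an integral,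
against the positive weight `t ^ (β - 1) e^(-t)`, of the quadratic forms of the Gaussian matrices
`exp (-s t ‖xᵢ - xⱼ‖²)`. These are positive semidefinite: up to a diagonal congruence a Gaussian
matrix is the entrywise exponential of a multiple of the Gram matrix, which is a limit of sums of
Hadamard powers of that Gram matrix (Schur product theorem). For distinct points the Gaussian
matrices tend to the identity as `t → ∞`, so the integrand is eventually positive.
-/

open Matrix MeasureTheory Set Filter Topology
open scoped ComplexOrder

namespace Matrix

variable {ι : Type*}

theorem PosSemidef.of_hasSum [Fintype ι] {X : Type*} {f : X → Matrix ι ι ℝ} {A : Matrix ι ι ℝ}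
    (hf : HasSum f A) (h : ∀ i, (f i).PosSemidef) : A.PosSemidef := by
  refine .of_dotProduct_mulVec_nonneg ?_ fun c => ?_
  · exact hf.matrix_conjTranspose.unique (by simpa only [(h _).isHermitian.eq] using hf)
  · let q : Matrix ι ι ℝ →+ ℝ := AddMonoidHom.mk' (fun M => star c ⬝ᵥ M *ᵥ c) fun M N => by
      simp [add_mulVec, dotProduct_add]
    have hq : Continuous q :=
      continuous_const.dotProduct (continuous_id.matrix_mulVec continuous_const)
    exact (hf.map q hq).nonneg fun i => (h i).dotProduct_mulVec_nonneg c

theorem PosSemidef.map_pow [Finite ι] {𝕜 : Type*} [RCLike 𝕜] {A : Matrix ι ι 𝕜}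
    (hA : A.PosSemidef) (n : ℕ) : (A.map (· ^ n)).PosSemidef := by
  induction n with
  | zero =>
    convert posSemidef_vecMulVec_self_star (1 : ι → 𝕜) using 1
    ext
    simp [vecMulVec]
  | succ n ih =>
    rw [show A.map (· ^ (n + 1)) = A.map (· ^ n) ⊙ A by ext; simp [pow_succ]]
    exact ih.hadamard hA

theorem PosSemidef.map_exp [Fintype ι] {A : Matrix ι ι ℝ} (hA : A.PosSemidef) :
    (A.map Real.exp).PosSemidef := by
  have hexp : HasSum (fun n : ℕ => (n.factorial⁻¹ : ℝ) • A.map (· ^ n)) (A.map Real.exp) :=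
    Pi.hasSum.2 fun i => Pi.hasSum.2 fun j => by
      simpa [Real.exp_eq_exp_ℝ] using NormedSpace.exp_series_hasSum_exp' (𝕂 := ℝ) (A i j)
  exact .of_hasSum hexp fun n => (hA.map_pow n).smul (by positivity)

theorem dotProduct_mulVec_of [Fintype ι] (c : ι → ℝ) (k : ι → ι → ℝ) :
    c ⬝ᵥ of k *ᵥ c = ∑ i, ∑ j, c i * c j * k i j := by
  simp only [dotProduct, mulVec, of_apply, Finset.mul_sum]
  exact Finset.sum_congr rfl fun i _ => Finset.sum_congr rfl fun j _ => by ring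

end Matrix

theorem Real.rpow_neg_eq_integral {a r : ℝ} (ha : 0 < a) (hr : 0 < r) :
    r ^ (-a) = (Gamma a)⁻¹ * ∫ t in Ioi 0, t ^ (a - 1) * exp (-(r * t)) := by
  rw [integral_rpow_mul_exp_neg_mul_Ioi ha hr, one_div, inv_rpow hr.le, rpow_neg hr.le,
    mul_comm _ (Gamma a), inv_mul_cancel_left₀ (Gamma_pos_of_pos ha).ne']

theorem Real.integrableOn_rpow_mul_exp_neg_mul {a r : ℝ} (ha : 0 < a) (hr : 0 < r) :
    IntegrableOn (fun t => t ^ (a - 1) * exp (-(r * t))) (Ioi 0) := by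
  simpa using integrableOn_rpow_mul_exp_neg_mul_rpow (p := 1) (by linarith) one_pos hr

theorem setIntegral_Ioi_pos_of_eventually_pos {f : ℝ → ℝ} {a : ℝ} (hf : ∀ t ∈ Ioi a, 0 ≤ f t)
    (hint : IntegrableOn f (Ioi a)) (hpos : ∀ᶠ t in atTop, 0 < f t) :
    0 < ∫ t in Ioi a, f t := by
  rw [setIntegral_pos_iff_support_of_nonneg_ae
    ((ae_restrict_iff' measurableSet_Ioi).2 (.of_forall hf)) hint]
  obtain ⟨T, hT⟩ := eventually_atTop.1 hpos
  calc (0 : ENNReal) < volume (Ioi (max T a)) := by simp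
    _ ≤ volume (Function.support f ∩ Ioi a) := measure_mono fun t ht =>
        ⟨(hT t (le_of_max_le_left ht.le)).ne', (le_max_right T a).trans_lt ht⟩

section Kernels

variable {ι E : Type*} [NormedAddCommGroup E]

noncomputable def gaussianMatrix (x : ι → E) (s : ℝ) : Matrix ι ι ℝ :=
  of fun i j => Real.exp (-(s * ‖x i - x j‖ ^ 2))

noncomputable def inverseMultiquadricMatrix (x : ι → E) (s β : ℝ) : Matrix ι ι ℝ :=
  of fun i j => (1 + s * ‖x i - x j‖ ^ 2) ^ (-β)

theorem tendsto_gaussianMatrix_atTop [DecidableEq ι] {x : ι → E} (hx : Function.Injective x) :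
    Tendsto (gaussianMatrix x) atTop (𝓝 1) := by
  refine tendsto_pi_nhds.2 fun i => tendsto_pi_nhds.2 fun j => ?_
  obtain rfl | hij := eq_or_ne i j
  · simp [gaussianMatrix]
  · have hd : 0 < ‖x i - x j‖ ^ 2 := pow_pos (norm_pos_iff.2 (sub_ne_zero.2 (hx.ne hij))) 2
    simpa [gaussianMatrix, one_apply_ne hij] using tendsto_id.atTop_mul_const hd

theorem rpow_mul_exp_neg_mul_dotProduct_gaussianMatrix_mulVec_eq_sum [Fintype ι] (x : ι → E)
    (s β : ℝ) (c : ι → ℝ) (t : ℝ) :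
    t ^ (β - 1) * Real.exp (-t) * (c ⬝ᵥ gaussianMatrix x (s * t) *ᵥ c) =
      ∑ i, ∑ j, c i * c j * (t ^ (β - 1) * Real.exp (-((1 + s * ‖x i - x j‖ ^ 2) * t))) := by
  simp only [gaussianMatrix, dotProduct_mulVec_of, Finset.mul_sum]
  refine Finset.sum_congr rfl fun i _ => Finset.sum_congr rfl fun j _ => ?_
  rw [show -((1 + s * ‖x i - x j‖ ^ 2) * t) = -t + -(s * t * ‖x i - x j‖ ^ 2) by ring,
    Real.exp_add]
  ring

theorem integrableOn_rpow_mul_exp_neg_mul_dotProduct_gaussianMatrix_mulVec [Fintype ι]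
    (x : ι → E) {s β : ℝ} (hs : 0 ≤ s) (hβ : 0 < β) (c : ι → ℝ) :
    IntegrableOn (fun t => t ^ (β - 1) * Real.exp (-t) * (c ⬝ᵥ gaussianMatrix x (s * t) *ᵥ c))
      (Ioi 0) := by
  simp_rw [rpow_mul_exp_neg_mul_dotProduct_gaussianMatrix_mulVec_eq_sum]
  exact integrable_finsetSum _ fun i _ => integrable_finsetSum _ fun j _ =>
    (Real.integrableOn_rpow_mul_exp_neg_mul hβ (by positivity)).const_mul _

theorem dotProduct_inverseMultiquadricMatrix_mulVec_eq_integral [Fintype ι] (x : ι → E) {s β : ℝ}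
    (hs : 0 ≤ s) (hβ : 0 < β) (c : ι → ℝ) :
    c ⬝ᵥ inverseMultiquadricMatrix x s β *ᵥ c = (Real.Gamma β)⁻¹ *
      ∫ t in Ioi 0, t ^ (β - 1) * Real.exp (-t) * (c ⬝ᵥ gaussianMatrix x (s * t) *ᵥ c) := by
  have hint (i j : ι) : IntegrableOn (fun t =>
      c i * c j * (t ^ (β - 1) * Real.exp (-((1 + s * ‖x i - x j‖ ^ 2) * t)))) (Ioi 0) :=
    (Real.integrableOn_rpow_mul_exp_neg_mul hβ (by positivity)).const_mul _
  simp_rw [rpow_mul_exp_neg_mul_dotProduct_gaussianMatrix_mulVec_eq_sum,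
    integral_finsetSum _ fun i _ => integrable_finsetSum _ fun j _ => hint i j,
    integral_finsetSum _ fun j _ => hint _ j, integral_const_mul, Finset.mul_sum,
    inverseMultiquadricMatrix, dotProduct_mulVec_of,
    Real.rpow_neg_eq_integral hβ (by positivity : 0 < 1 + s * ‖x _ - x _‖ ^ 2)]
  exact Finset.sum_congr rfl fun i _ => Finset.sum_congr rfl fun j _ => by ring

variable [InnerProductSpace ℝ E]

theorem posSemidef_gaussianMatrix [Fintype ι] (x : ι → E) {s : ℝ} (hs : 0 ≤ s) :
    (gaussianMatrix x s).PosSemidef := by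
  classical
  let D : Matrix ι ι ℝ := diagonal fun i => Real.exp (-(s * ‖x i‖ ^ 2))
  have hfactor : gaussianMatrix x s = Dᴴ * ((2 * s) • gram ℝ x).map Real.exp * D := by
    ext i j
    simp only [gaussianMatrix, D, diagonal_conjTranspose, star_trivial, diagonal_mul,
      mul_diagonal, of_apply, map_apply, Matrix.smul_apply, gram_apply, smul_eq_mul,
      norm_sub_sq_real, ← Real.exp_add]
    congr 1
    rw [real_inner_comm]
    ring
  rw [hfactor]
  exact (((posSemidef_gram ℝ x).smul (by positivity : (0 : ℝ) ≤ 2 * s)).map_exp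
    ).conjTranspose_mul_mul_same D

theorem posDef_inverseMultiquadricMatrix [Fintype ι] {x : ι → E} (hx : Function.Injective x)
    {s β : ℝ} (hs : 0 < s) (hβ : 0 < β) : (inverseMultiquadricMatrix x s β).PosDef := by
  classical
  refine .of_dotProduct_mulVec_pos (isHermitian_iff_isSymm.2 ?_) fun c hc => ?_
  · ext i j
    simp [inverseMultiquadricMatrix, norm_sub_rev]
  have hlim : Tendsto (fun t => c ⬝ᵥ gaussianMatrix x (s * t) *ᵥ c) atTop (𝓝 (c ⬝ᵥ c)) := by
    have hq : Continuous fun M : Matrix ι ι ℝ => c ⬝ᵥ M *ᵥ c :=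
      continuous_const.dotProduct (continuous_id.matrix_mulVec continuous_const)
    simpa [Function.comp_def] using (hq.tendsto 1).comp
      ((tendsto_gaussianMatrix_atTop hx).comp (tendsto_id.const_mul_atTop hs))
  have hcc : 0 < c ⬝ᵥ c := by simpa using dotProduct_star_self_pos_iff.2 hc
  rw [star_trivial, dotProduct_inverseMultiquadricMatrix_mulVec_eq_integral x hs.le hβ]
  refine mul_pos (inv_pos.2 (Real.Gamma_pos_of_pos hβ)) (setIntegral_Ioi_pos_of_eventually_pos
    (fun t ht => ?_)
    (integrableOn_rpow_mul_exp_neg_mul_dotProduct_gaussianMatrix_mulVec x hs.le hβ c) ?_)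
  · have ht : 0 < t := ht
    simpa using mul_nonneg (by positivity : 0 ≤ t ^ (β - 1) * Real.exp (-t))
      ((posSemidef_gaussianMatrix x (by positivity : 0 ≤ s * t)).dotProduct_mulVec_nonneg c)
  · filter_upwards [eventually_gt_atTop 0, hlim.eventually (lt_mem_nhds hcc)] with t ht hct
    positivity

end Kernels

theorem inverse_multiquadric_kernel_matrix_posDef_general
    {d N : ℕ} (ε : ℝ) (hε : 0 < ε)
    (x : Fin N → EuclideanSpace ℝ (Fin d)) (hx : Function.Injective x) :
    (Matrix.of fun i j : Fin N =>
      (1 + ε ^ 2 * ‖x i - x j‖ ^ 2) ^ (-(1 / 2 : ℝ))).IsSymm ∧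
    (Matrix.of fun i j : Fin N =>
      (1 + ε ^ 2 * ‖x i - x j‖ ^ 2) ^ (-(1 / 2 : ℝ))).PosDef := by
  have h : (inverseMultiquadricMatrix x (ε ^ 2) (1 / 2)).PosDef :=
    posDef_inverseMultiquadricMatrix hx (by positivity) one_half_pos
  exact ⟨isHermitian_iff_isSymm.1 h.isHermitian, h⟩

/-- The inverse multiquadric kernel matrix on pairwise distinct points is
symmetric positive definite. -/
theorem inverse_multiquadric_kernel_matrix_posDef
    {d N : ℕ} (hd : 1 ≤ d) (ε : ℝ) (hε : 0 < ε)
    (x : Fin N → EuclideanSpace ℝ (Fin d)) (hx : Function.Injective x) :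
    (Matrix.of fun i j : Fin N =>
      (1 + ε ^ 2 * ‖x i - x j‖ ^ 2) ^ (-(1 / 2 : ℝ))).IsSymm ∧
    (Matrix.of fun i j : Fin N =>
      (1 + ε ^ 2 * ‖x i - x j‖ ^ 2) ^ (-(1 / 2 : ℝ))).PosDef :=
  inverse_multiquadric_kernel_matrix_posDef_general ε hε x hx
end

section
/- For every shape parameter ε > 0, every d ≥ 1, and every finite set of pairwise distinct points x_1, …, x_N ∈ ℝ^d, the Matérn C⁴ kernel matrix A with entries A_{ij} = exp(−ε r_{ij}) (ε² r_{ij}² + 3 ε r_{ij} + 3), where r_{ij} = ‖x_i − x_j‖ (Euclidean norm), is symmetric positive definite. -/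
/-!
With `w(t) = exp (-(ε t / 2)² - (r / t)²)` one has `φ_ε(r) = ε⁵ / (4 √π) ∫₀^∞ t⁴ w(t) dt`, so the
Matérn kernel is a mixture, with positive weights, of the Gaussian kernels `exp (-‖x - y‖² / t²)`.
A Gaussian kernel is strictly positive definite: by its Fourier representation its quadratic form
is a positive multiple of `∫ exp (-b ‖v‖²) |∑ cᵢ exp (i ⟪xᵢ, v⟫)|² dv`, and this trigonometric
polynomial is not identically zero because distinct characters are linearly independent.

The moments `M_k = ∫₀^∞ t^k w` come from integrating `(t^(k+1) w)'` over `(0, ∞)`, which gives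
`(ε² / 2) M_{k+2} = (k + 1) M_k + 2 ∫₀^∞ t^k (r / t)² w`, and from two substitutions:
`t ↦ 2r / (ε t)` fixes `w`, so `∫₀^∞ (r / t)² w = (ε r / 2) M_0`; and `s = ε t / 2 - r / t` maps
`(0, ∞)` onto `ℝ` with `ds = (ε / 2 + r / t²) dt` and `w = e^{-ε r} e^{-s²}`, so together with the
first substitution `ε M_0 = √π e^{-ε r}`.
-/

open MeasureTheory Real Set Filter Topology
open scoped RealInnerProductSpace

noncomputable section

section GaussianKernel

variable {V : Type*} [NormedAddCommGroup V] [InnerProductSpace ℝ V]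
variable {ι : Type*} [Fintype ι]

def expInnerChar (w : V) : Multiplicative V →* ℂ where
  toFun v := Complex.exp (Complex.I * ⟪w, v.toAdd⟫)
  map_one' := by simp
  map_mul' u v := by simp [inner_add_right, mul_add, Complex.exp_add]

def trigPoly (x : ι → V) (c : ι → ℝ) (v : V) : ℂ :=
  ∑ i, c i * Complex.exp (Complex.I * ⟪x i, v⟫)

lemma expInnerChar_injective : Function.Injective (expInnerChar (V := V)) := by
  intro w₁ w₂ h
  by_contra hne
  have hw : w₁ - w₂ ≠ 0 := sub_ne_zero.mpr hne
  set v := (π / ‖w₁ - w₂‖ ^ 2) • (w₁ - w₂)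
  have hv : ⟪w₁, v⟫ - ⟪w₂, v⟫ = π := by
    rw [← inner_sub_left, real_inner_smul_right, real_inner_self_eq_norm_sq]
    field_simp
  have hchar := DFunLike.congr_fun h (Multiplicative.ofAdd v)
  simp only [expInnerChar, MonoidHom.coe_mk, OneHom.coe_mk, toAdd_ofAdd] at hchar
  have : Complex.exp (π * Complex.I) = 1 := by
    rw [← hv, Complex.ofReal_sub, sub_mul, Complex.exp_sub, mul_comm _ Complex.I,
      mul_comm (⟪w₂, v⟫ : ℂ), hchar, div_self (Complex.exp_ne_zero _)]
  norm_num [Complex.exp_pi_mul_I] at this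

lemma exists_trigPoly_ne_zero {x : ι → V} (hx : Function.Injective x) {c : ι → ℝ} (hc : c ≠ 0) :
    ∃ v, trigPoly x c v ≠ 0 := by
  have hli := (linearIndependent_monoidHom (Multiplicative V) ℂ).comp _
    (expInnerChar_injective.comp hx)
  by_contra! h
  refine hc (funext fun i => Complex.ofReal_injective ?_)
  refine Fintype.linearIndependent_iff.mp hli (fun i => c i) (funext fun v => ?_) i
  simpa [expInnerChar, trigPoly, Finset.sum_apply] using h v.toAdd

lemma continuous_trigPoly (x : ι → V) (c : ι → ℝ) : Continuous (trigPoly x c) := by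
  unfold trigPoly; fun_prop

lemma ofReal_exp_mul_normSq_trigPoly (x : ι → V) (c : ι → ℝ) (b : ℝ) (v : V) :
    ((exp (-b * ‖v‖ ^ 2) * Complex.normSq (trigPoly x c v) : ℝ) : ℂ) =
      ∑ i, ∑ j, (c i * c j : ℂ) * Complex.exp (-b * ‖v‖ ^ 2 + Complex.I * ⟪x i - x j, v⟫) := by
  rw [Complex.ofReal_mul, ← Complex.mul_conj, trigPoly, map_sum, Finset.sum_mul_sum,
    Finset.mul_sum]
  refine Finset.sum_congr rfl fun i _ => ?_
  rw [Finset.mul_sum]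
  refine Finset.sum_congr rfl fun j _ => ?_
  simp only [map_mul, Complex.conj_ofReal, ← Complex.exp_conj, Complex.conj_I, inner_sub_left]
  push_cast
  rw [show -(b : ℂ) * ‖v‖ ^ 2 + Complex.I * (⟪x i, v⟫ - ⟪x j, v⟫) =
    -b * ‖v‖ ^ 2 + Complex.I * ⟪x i, v⟫ + -Complex.I * ⟪x j, v⟫ by ring,
    Complex.exp_add, Complex.exp_add]
  ring

variable [FiniteDimensional ℝ V]

section Integral

variable [MeasurableSpace V] [BorelSpace V]

lemma integrable_exp_mul_normSq_trigPoly (x : ι → V) (c : ι → ℝ) {b : ℝ} (hb : 0 < b) :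
    Integrable fun v => exp (-b * ‖v‖ ^ 2) * Complex.normSq (trigPoly x c v) := by
  have hb' : 0 < (b : ℂ).re := by simpa using hb
  have hsum : Integrable fun v : V => ∑ i, ∑ j,
      (c i * c j : ℂ) * Complex.exp (-b * ‖v‖ ^ 2 + Complex.I * ⟪x i - x j, v⟫) :=
    integrable_finsetSum _ fun i _ => integrable_finsetSum _ fun j _ =>
      (GaussianFourier.integrable_cexp_neg_mul_sq_norm_add hb' Complex.I (x i - x j)).const_mul _
  refine hsum.re.congr (.of_forall fun v => ?_)
  simp only [← ofReal_exp_mul_normSq_trigPoly]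
  exact RCLike.ofReal_re _

lemma integral_exp_mul_normSq_trigPoly (x : ι → V) (c : ι → ℝ) {b : ℝ} (hb : 0 < b) :
    ∫ v, exp (-b * ‖v‖ ^ 2) * Complex.normSq (trigPoly x c v) =
      (π / b) ^ (Module.finrank ℝ V / 2 : ℝ) *
        ∑ i, ∑ j, c i * c j * exp (-‖x i - x j‖ ^ 2 / (4 * b)) := by
  have hb' : 0 < (b : ℂ).re := by simpa using hb
  have hint (i j : ι) := (GaussianFourier.integrable_cexp_neg_mul_sq_norm_add hb' Complex.I
    (x i - x j)).const_mul (c i * c j : ℂ)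
  apply Complex.ofReal_injective
  rw [← integral_complex_ofReal, funext (ofReal_exp_mul_normSq_trigPoly x c b),
    integral_finsetSum _ fun i _ => integrable_finsetSum _ fun j _ => hint i j]
  push_cast
  rw [Finset.mul_sum]
  refine Finset.sum_congr rfl fun i _ => ?_
  rw [integral_finsetSum _ fun j _ => hint i j, Finset.mul_sum]
  refine Finset.sum_congr rfl fun j _ => ?_
  rw [integral_const_mul, GaussianFourier.integral_cexp_neg_mul_sq_norm_add hb',
    Complex.ofReal_cpow (by positivity)]
  push_cast
  rw [Complex.I_sq]
  ring_nf

end Integral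

lemma sum_mul_exp_neg_mul_norm_sub_sq_pos {x : ι → V} (hx : Function.Injective x) {c : ι → ℝ}
    (hc : c ≠ 0) {s : ℝ} (hs : 0 < s) :
    0 < ∑ i, ∑ j, c i * c j * exp (-s * ‖x i - x j‖ ^ 2) := by
  borelize V
  have hb : 0 < 1 / (4 * s) := by positivity
  obtain ⟨v₀, hv₀⟩ := exists_trigPoly_ne_zero hx hc
  have hpos : 0 < ∫ v, exp (-(1 / (4 * s)) * ‖v‖ ^ 2) * Complex.normSq (trigPoly x c v) :=
    integral_pos_of_integrable_nonneg_nonzero (x := v₀)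
      (by have := continuous_trigPoly x c; fun_prop) (integrable_exp_mul_normSq_trigPoly x c hb)
      (fun v => mul_nonneg (exp_pos _).le (Complex.normSq_nonneg _))
      (mul_pos (exp_pos _) (Complex.normSq_pos.mpr hv₀)).ne'
  rw [integral_exp_mul_normSq_trigPoly x c hb] at hpos
  have hexponent (r : ℝ) : -r ^ 2 / (4 * (1 / (4 * s))) = -s * r ^ 2 := by field_simp
  simpa only [hexponent] using pos_of_mul_pos_right hpos (by positivity)

end GaussianKernel

section RealIntegrals

lemma integrableOn_Ioi_of_norm_le_pow_mul_exp {f : ℝ → ℝ} (hf : Measurable f) {b : ℝ}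
    (hb : 0 < b) (k : ℕ) (h : ∀ t > 0, ‖f t‖ ≤ t ^ k * exp (-b * t ^ 2)) :
    IntegrableOn f (Ioi 0) := by
  have hg := integrableOn_rpow_mul_exp_neg_mul_sq hb (s := k)
    (by linarith [k.cast_nonneg' (α := ℝ)])
  simp only [rpow_natCast] at hg
  exact hg.mono' hf.aestronglyMeasurable ((ae_restrict_iff' measurableSet_Ioi).mpr (.of_forall h))

lemma integral_comp_div_Ioi (g : ℝ → ℝ) {c : ℝ} (hc : 0 < c) :
    ∫ t in Ioi 0, c / t ^ 2 * g (c / t) = ∫ t in Ioi 0, g t := by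
  have h := integral_comp_rpow_Ioi (fun y => c * g (c * y)) (p := -1) (by norm_num)
  rw [integral_const_mul, integral_comp_mul_left_Ioi _ _ hc, mul_zero, smul_eq_mul,
    mul_inv_cancel_left₀ hc.ne'] at h
  rw [← h]
  refine setIntegral_congr_fun measurableSet_Ioi fun t (ht : 0 < t) => ?_
  rw [show (-1:ℝ) - 1 = -(2:ℕ) by norm_num, rpow_neg ht.le, rpow_natCast, rpow_neg_one]
  simp only [smul_eq_mul]
  norm_num
  field_simp

lemma integral_add_div_sq_mul_exp_neg_sq {a r : ℝ} (ha : 0 < a) (hr : 0 < r) :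
    ∫ t in Ioi 0, (a / 2 + r / t ^ 2) * exp (-(a * t / 2 - r / t) ^ 2) = √π := by
  set f : ℝ → ℝ := fun t => a * t / 2 - r / t
  have hderiv (t : ℝ) (ht : t ∈ Ioi 0) : HasDerivWithinAt f (a / 2 + r / t ^ 2) (Ioi 0) t := by
    have h := (((hasDerivAt_id' t).const_mul a).div_const 2).sub
      ((hasDerivAt_const t r).div (hasDerivAt_id' t) (ne_of_gt ht))
    exact (h.congr_deriv (by ring)).hasDerivWithinAt
  have hmono : StrictMonoOn f (Ioi 0) := fun s (hs : 0 < s) t (ht : 0 < t) hst => by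
    have : r / t < r / s := div_lt_div_of_pos_left hr hs hst
    simp only [f]
    nlinarith
  have himage : f '' Ioi 0 = univ := by
    refine eq_univ_of_forall fun s => ?_
    set q := √(s ^ 2 + 2 * a * r)
    have hq : q ^ 2 = s ^ 2 + 2 * a * r := sq_sqrt (by positivity)
    have hsq : -s < q := by nlinarith [sqrt_nonneg (s ^ 2 + 2 * a * r)]
    have hsq' : 0 < s + q := by linarith
    refine ⟨(s + q) / a, div_pos hsq' ha, ?_⟩
    simp only [f]
    field_simp
    nlinarith
  have h := integral_image_eq_integral_abs_deriv_smul measurableSet_Ioi hderiv hmono.injOn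
    (fun s => exp (-s ^ 2))
  rw [himage, setIntegral_univ] at h
  have hgauss : ∫ s, exp (-s ^ 2) = √π := by simpa using integral_gaussian 1
  rw [← hgauss, h]
  refine setIntegral_congr_fun measurableSet_Ioi fun t (ht : 0 < t) => ?_
  rw [smul_eq_mul, abs_of_pos (by positivity)]

lemma setIntegral_pos_of_pos {X : Type*} [MeasurableSpace X] {μ : Measure X} {s : Set X}
    {f : X → ℝ} (hs : MeasurableSet s) (hμs : 0 < μ s) (hf : IntegrableOn f s μ)
    (hpos : ∀ x ∈ s, 0 < f x) : 0 < ∫ x in s, f x ∂μ := by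
  rw [setIntegral_pos_iff_support_of_nonneg_ae
    ((ae_restrict_iff' hs).mpr (.of_forall fun x hx => (hpos x hx).le)) hf]
  exact hμs.trans_le (measure_mono fun x hx => ⟨(hpos x hx).ne', hx⟩)

end RealIntegrals

def gaussMix (a r t : ℝ) : ℝ := exp (-(a * t / 2) ^ 2 - (r / t) ^ 2)

section GaussMix

variable {a r : ℝ}

lemma gaussMix_pos (a r t : ℝ) : 0 < gaussMix a r t := exp_pos _

@[fun_prop]
lemma measurable_gaussMix (a r : ℝ) : Measurable (gaussMix a r) := by
  unfold gaussMix; fun_prop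

lemma gaussMix_eq_mul (a r t : ℝ) :
    gaussMix a r t = exp (-(a / 2) ^ 2 * t ^ 2) * exp (-(t ^ 2)⁻¹ * r ^ 2) := by
  rw [gaussMix, ← exp_add]
  ring_nf

lemma gaussMix_le (a r t : ℝ) : gaussMix a r t ≤ exp (-(a / 2) ^ 2 * t ^ 2) :=
  exp_le_exp.mpr (by nlinarith [sq_nonneg (r / t)])

lemma sq_div_mul_gaussMix_le (a r t : ℝ) :
    (r / t) ^ 2 * gaussMix a r t ≤ exp (-(a / 2) ^ 2 * t ^ 2) := by
  have hy : (r / t) ^ 2 * exp (-(r / t) ^ 2) ≤ 1 := by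
    rw [exp_neg, ← div_eq_mul_inv, div_le_one (exp_pos _)]
    linarith [add_one_le_exp ((r / t) ^ 2)]
  have hsplit : gaussMix a r t = exp (-(a / 2) ^ 2 * t ^ 2) * exp (-(r / t) ^ 2) := by
    rw [gaussMix, ← exp_add]
    ring_nf
  rw [hsplit, mul_left_comm]
  exact mul_le_of_le_one_right (exp_pos _).le hy

lemma gaussMix_div (ha : a ≠ 0) (hr : r ≠ 0) {t : ℝ} (ht : t ≠ 0) :
    gaussMix a r (2 * r / (a * t)) = gaussMix a r t := by
  unfold gaussMix
  congr 1
  field_simp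
  ring

lemma gaussMix_eq_exp_mul (a r : ℝ) {t : ℝ} (ht : t ≠ 0) :
    gaussMix a r t = exp (-(a * r)) * exp (-(a * t / 2 - r / t) ^ 2) := by
  rw [gaussMix, ← exp_add]
  congr 1
  field_simp
  ring

lemma hasDerivAt_gaussMix (a r : ℝ) {t : ℝ} (ht : t ≠ 0) :
    HasDerivAt (gaussMix a r) ((2 * (r / t) ^ 2 / t - a ^ 2 * t / 2) * gaussMix a r t) t := by
  have h := (((((hasDerivAt_id' t).const_mul a).div_const 2).pow 2).neg.sub
    (((hasDerivAt_const t r).div (hasDerivAt_id' t) ht).pow 2)).exp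
  convert h using 1
  · rfl
  · simp only [gaussMix, Pi.sub_apply, Pi.neg_apply, Pi.pow_apply, Pi.div_apply]
    norm_num
    field_simp
    ring

lemma integrableOn_pow_mul_gaussMix (ha : 0 < a) (r : ℝ) (k : ℕ) :
    IntegrableOn (fun t => t ^ k * gaussMix a r t) (Ioi 0) := by
  refine integrableOn_Ioi_of_norm_le_pow_mul_exp (b := (a / 2) ^ 2) (by fun_prop) (by positivity) k
    fun t ht => ?_
  rw [norm_of_nonneg (mul_nonneg (pow_nonneg ht.le k) (gaussMix_pos a r t).le)]
  exact mul_le_mul_of_nonneg_left (gaussMix_le a r t) (pow_nonneg ht.le k)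

lemma integrableOn_pow_mul_sq_div_mul_gaussMix (ha : 0 < a) (r : ℝ) (k : ℕ) :
    IntegrableOn (fun t => t ^ k * ((r / t) ^ 2 * gaussMix a r t)) (Ioi 0) := by
  refine integrableOn_Ioi_of_norm_le_pow_mul_exp (b := (a / 2) ^ 2) (by fun_prop) (by positivity) k
    fun t ht => ?_
  rw [norm_of_nonneg (mul_nonneg (pow_nonneg ht.le k)
    (mul_nonneg (sq_nonneg _) (gaussMix_pos a r t).le))]
  exact mul_le_mul_of_nonneg_left (sq_div_mul_gaussMix_le a r t) (pow_nonneg ht.le k)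

lemma continuousWithinAt_pow_succ_mul_gaussMix (a r : ℝ) (k : ℕ) :
    ContinuousWithinAt (fun t => t ^ (k + 1) * gaussMix a r t) (Ici 0) 0 := by
  have hpow : Tendsto (fun t : ℝ => ‖t ^ (k + 1)‖) (𝓝 0) (𝓝 0) := by
    simpa using ((continuous_pow (k + 1)).norm.tendsto (0 : ℝ))
  have hle (t : ℝ) : ‖t ^ (k + 1) * gaussMix a r t‖ ≤ ‖t ^ (k + 1)‖ := by
    rw [norm_mul, norm_of_nonneg (gaussMix_pos a r t).le]
    exact mul_le_of_le_one_right (norm_nonneg _)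
      ((gaussMix_le a r t).trans (exp_le_one_iff.mpr (by nlinarith [sq_nonneg t, sq_nonneg a])))
  simpa [ContinuousWithinAt] using (squeeze_zero_norm hle hpow).mono_left nhdsWithin_le_nhds

lemma tendsto_pow_mul_gaussMix_atTop (ha : 0 < a) (r : ℝ) (k : ℕ) :
    Tendsto (fun t => t ^ k * gaussMix a r t) atTop (𝓝 0) := by
  have hgauss := (tendsto_rpow_abs_mul_exp_neg_mul_sq_cocompact (by positivity : 0 < (a / 2) ^ 2)
    k).mono_left atTop_le_cocompact
  refine squeeze_zero' ?_ ?_ hgauss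
  · filter_upwards [eventually_ge_atTop 0] with t ht
      using mul_nonneg (pow_nonneg ht k) (gaussMix_pos a r t).le
  · filter_upwards [eventually_ge_atTop 0] with t ht
    rw [rpow_natCast, abs_of_nonneg ht]
    exact mul_le_mul_of_nonneg_left (gaussMix_le a r t) (by positivity)

lemma integral_pow_mul_gaussMix_recurrence (ha : 0 < a) (r : ℝ) (k : ℕ) :
    ∫ t in Ioi 0, t ^ (k + 2) * gaussMix a r t = 2 / a ^ 2 *
      ((k + 1) * (∫ t in Ioi 0, t ^ k * gaussMix a r t) +
        2 * ∫ t in Ioi 0, t ^ k * ((r / t) ^ 2 * gaussMix a r t)) := by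
  have hderiv (t : ℝ) (ht : t ∈ Ioi 0) : HasDerivAt (fun t => t ^ (k + 1) * gaussMix a r t)
      ((k + 1) * (t ^ k * gaussMix a r t) - a ^ 2 / 2 * (t ^ (k + 2) * gaussMix a r t) +
        2 * (t ^ k * ((r / t) ^ 2 * gaussMix a r t))) t := by
    refine ((hasDerivAt_pow (k + 1) t).mul (hasDerivAt_gaussMix a r (ne_of_gt ht))).congr_deriv ?_
    have ht' : t ≠ 0 := ne_of_gt ht
    field_simp
    push_cast
    ring
  have hint₀ := (integrableOn_pow_mul_gaussMix ha r k).const_mul (k + 1 : ℝ)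
  have hint₂ := (integrableOn_pow_mul_gaussMix ha r (k + 2)).const_mul (a ^ 2 / 2)
  have hintR := (integrableOn_pow_mul_sq_div_mul_gaussMix ha r k).const_mul 2
  have hint₀₂ : IntegrableOn (fun t => (k + 1) * (t ^ k * gaussMix a r t) -
      a ^ 2 / 2 * (t ^ (k + 2) * gaussMix a r t)) (Ioi 0) := hint₀.sub hint₂
  have hint : IntegrableOn (fun t => (k + 1) * (t ^ k * gaussMix a r t) -
      a ^ 2 / 2 * (t ^ (k + 2) * gaussMix a r t) + 2 * (t ^ k * ((r / t) ^ 2 * gaussMix a r t)))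
      (Ioi 0) := hint₀₂.add hintR
  have h := integral_Ioi_of_hasDerivAt_of_tendsto (continuousWithinAt_pow_succ_mul_gaussMix a r k)
    hderiv hint (tendsto_pow_mul_gaussMix_atTop ha r (k + 1))
  rw [integral_add hint₀₂ hintR, integral_sub hint₀ hint₂, integral_const_mul,
    integral_const_mul, integral_const_mul] at h
  simp only [ne_eq, Nat.add_eq_zero_iff, one_ne_zero, and_false, not_false_eq_true, zero_pow,
    zero_mul, sub_zero] at h
  rw [div_mul_eq_mul_div, eq_div_iff (by positivity)]
  linarith

lemma integral_sq_div_mul_gaussMix (ha : 0 < a) (hr : 0 ≤ r) :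
    ∫ t in Ioi 0, (r / t) ^ 2 * gaussMix a r t = a * r / 2 * ∫ t in Ioi 0, gaussMix a r t := by
  rcases hr.eq_or_lt with rfl | hr
  · simp
  rw [← integral_comp_div_Ioi (gaussMix a r) (by positivity : 0 < 2 * r / a),
    ← integral_const_mul]
  refine setIntegral_congr_fun measurableSet_Ioi fun t (ht : 0 < t) => ?_
  rw [show 2 * r / a / t = 2 * r / (a * t) by rw [div_div], gaussMix_div ha.ne' hr.ne' ht.ne']
  field_simp

lemma integral_gaussMix (ha : 0 < a) (hr : 0 ≤ r) :
    ∫ t in Ioi 0, gaussMix a r t = √π / a * exp (-(a * r)) := by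
  rcases hr.eq_or_lt with rfl | hr
  · have hsqrt : √(π / (a / 2) ^ 2) / 2 = √π / a := by
      rw [sqrt_div' _ (by positivity), sqrt_sq (by positivity)]
      field_simp
    simpa [gaussMix_eq_mul, ← hsqrt] using integral_gaussian_Ioi ((a / 2) ^ 2)
  have hint := integrableOn_pow_mul_gaussMix ha r 0
  have hintR := integrableOn_pow_mul_sq_div_mul_gaussMix ha r 0
  simp only [pow_zero, one_mul] at hint hintR
  have hsplit (t : ℝ) (ht : t ∈ Ioi 0) : (a / 2 + r / t ^ 2) * exp (-(a * t / 2 - r / t) ^ 2) =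
      exp (a * r) * (a / 2 * gaussMix a r t + r⁻¹ * ((r / t) ^ 2 * gaussMix a r t)) := by
    rw [gaussMix_eq_exp_mul a r (ne_of_gt ht)]
    field_simp
    rw [← exp_add, add_neg_cancel, exp_zero]
  have h := integral_add_div_sq_mul_exp_neg_sq ha hr
  rw [setIntegral_congr_fun measurableSet_Ioi hsplit, integral_const_mul,
    integral_add (hint.const_mul _) (hintR.const_mul _), integral_const_mul, integral_const_mul,
    integral_sq_div_mul_gaussMix ha hr.le] at h
  rw [exp_neg, ← h]
  field_simp
  ring

lemma integral_pow_four_mul_gaussMix (ha : 0 < a) (hr : 0 ≤ r) :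
    ∫ t in Ioi 0, t ^ 4 * gaussMix a r t =
      4 * √π / a ^ 5 * (exp (-(a * r)) * (a ^ 2 * r ^ 2 + 3 * (a * r) + 3)) := by
  have h₀ := integral_pow_mul_gaussMix_recurrence ha r 0
  have h₂ := integral_pow_mul_gaussMix_recurrence ha r 2
  have hR₂ : ∫ t in Ioi 0, t ^ 2 * ((r / t) ^ 2 * gaussMix a r t) =
      r ^ 2 * ∫ t in Ioi 0, gaussMix a r t := by
    rw [← integral_const_mul]
    refine setIntegral_congr_fun measurableSet_Ioi fun t (ht : 0 < t) => ?_
    field_simp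
  norm_num only [pow_zero, one_mul] at h₀ h₂
  rw [h₂, hR₂, h₀, integral_sq_div_mul_gaussMix ha hr, integral_gaussMix ha hr]
  field_simp
  ring

end GaussMix

lemma Matrix.posDef_of_sum_mul_pos {n : Type*} [Fintype n] {A : Matrix n n ℝ} (hA : A.IsSymm)
    (h : ∀ c : n → ℝ, c ≠ 0 → 0 < ∑ i, ∑ j, c i * c j * A i j) : A.PosDef := by
  refine Matrix.posDef_iff_dotProduct_mulVec.mpr
    ⟨Matrix.isHermitian_iff_isSymm.mpr hA, fun c hc => ?_⟩
  simpa [dotProduct, Matrix.mulVec, Finset.mul_sum, mul_comm, mul_left_comm] using h c hc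

def maternC4 (ε r : ℝ) : ℝ := exp (-ε * r) * (ε ^ 2 * r ^ 2 + 3 * ε * r + 3)

lemma maternC4_eq_integral {ε r : ℝ} (hε : 0 < ε) (hr : 0 ≤ r) :
    maternC4 ε r = ε ^ 5 / (4 * √π) * ∫ t in Ioi 0, t ^ 4 * gaussMix ε r t := by
  rw [integral_pow_four_mul_gaussMix hε hr, maternC4, neg_mul]
  field_simp

section MaternKernel

variable {V : Type*} [NormedAddCommGroup V] [InnerProductSpace ℝ V] [FiniteDimensional ℝ V]
variable {ι : Type*} [Fintype ι]

lemma sum_mul_maternC4_pos {x : ι → V} (hx : Function.Injective x) {c : ι → ℝ} (hc : c ≠ 0)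
    {ε : ℝ} (hε : 0 < ε) : 0 < ∑ i, ∑ j, c i * c j * maternC4 ε ‖x i - x j‖ := by
  have hint (i j : ι) : IntegrableOn
      (fun t => c i * c j * (t ^ 4 * gaussMix ε ‖x i - x j‖ t)) (Ioi 0) :=
    (integrableOn_pow_mul_gaussMix hε _ 4).const_mul _
  have hsum : ∑ i, ∑ j, c i * c j * maternC4 ε ‖x i - x j‖ = ε ^ 5 / (4 * √π) *
      ∫ t in Ioi 0, ∑ i, ∑ j, c i * c j * (t ^ 4 * gaussMix ε ‖x i - x j‖ t) := by
    rw [integral_finsetSum _ fun i _ => integrable_finsetSum _ fun j _ => hint i j, Finset.mul_sum]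
    refine Finset.sum_congr rfl fun i _ => ?_
    rw [integral_finsetSum _ fun j _ => hint i j, Finset.mul_sum]
    refine Finset.sum_congr rfl fun j _ => ?_
    rw [integral_const_mul, maternC4_eq_integral hε (norm_nonneg _)]
    ring
  rw [hsum]
  refine mul_pos (by positivity) (setIntegral_pos_of_pos measurableSet_Ioi (by simp)
    (integrable_finsetSum _ fun i _ => integrable_finsetSum _ fun j _ => hint i j)
    fun t (ht : 0 < t) => ?_)
  have hfactor : ∑ i, ∑ j, c i * c j * (t ^ 4 * gaussMix ε ‖x i - x j‖ t) =
      t ^ 4 * exp (-(ε / 2) ^ 2 * t ^ 2) *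
        ∑ i, ∑ j, c i * c j * exp (-(t ^ 2)⁻¹ * ‖x i - x j‖ ^ 2) := by
    simp only [gaussMix_eq_mul, Finset.mul_sum]
    refine Finset.sum_congr rfl fun i _ => Finset.sum_congr rfl fun j _ => ?_
    ring
  rw [hfactor]
  exact mul_pos (by positivity) (sum_mul_exp_neg_mul_norm_sub_sq_pos hx hc (by positivity))

end MaternKernel

theorem matern_C4_kernel_matrix_posDef_general
    {d N : ℕ} (ε : ℝ) (hε : 0 < ε)
    (x : Fin N → EuclideanSpace ℝ (Fin d)) (hx : Function.Injective x) :
    (Matrix.of fun i j : Fin N =>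
      Real.exp (-ε * ‖x i - x j‖) *
        (ε ^ 2 * ‖x i - x j‖ ^ 2 + 3 * ε * ‖x i - x j‖ + 3)).IsSymm ∧
    (Matrix.of fun i j : Fin N =>
      Real.exp (-ε * ‖x i - x j‖) *
        (ε ^ 2 * ‖x i - x j‖ ^ 2 + 3 * ε * ‖x i - x j‖ + 3)).PosDef := by
  have hsymm : (Matrix.of fun i j => maternC4 ε ‖x i - x j‖).IsSymm :=
    Matrix.IsSymm.ext fun i j => by simp [norm_sub_rev]
  exact ⟨hsymm, Matrix.posDef_of_sum_mul_pos hsymm fun c hc => sum_mul_maternC4_pos hx hc hε⟩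

/-- The Matérn C⁴ kernel matrix on pairwise distinct points is symmetric positive definite. -/
theorem matern_C4_kernel_matrix_posDef
    {d N : ℕ} (hd : 1 ≤ d) (ε : ℝ) (hε : 0 < ε)
    (x : Fin N → EuclideanSpace ℝ (Fin d)) (hx : Function.Injective x) :
    (Matrix.of fun i j : Fin N =>
      Real.exp (-ε * ‖x i - x j‖) *
        (ε ^ 2 * ‖x i - x j‖ ^ 2 + 3 * ε * ‖x i - x j‖ + 3)).IsSymm ∧
    (Matrix.of fun i j : Fin N =>
      Real.exp (-ε * ‖x i - x j‖) *
        (ε ^ 2 * ‖x i - x j‖ ^ 2 + 3 * ε * ‖x i - x j‖ + 3)).PosDef :=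
  matern_C4_kernel_matrix_posDef_general ε hε x hx
end
end
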